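/- Fix (x,y) with y ≠ 0 and let N ∈ ℝⁿ satisfy Σ_{i,j} g_{ij} y^i N^j = 0 and Σ_i b_i N^i = 0, and assume τ > 0. Then the g*-covariant components of N* = N/√τ satisfy N*_i := Σ_j g*_{ij} N*^j = √τ N_i, where N_i = Σ_j g_{ij} N^j, g*_{ij} = ½ ∂̇_i∂̇_j (L*²), and τ = e^{σ} L*/L. -/

import Mathlib

/-!
Write `ℓ = ∂̇L` and `H = ∂̇∂̇L` at `y`. Then `g = ℓ ℓᵀ + L H` and
`g* = (e^σ ℓ + b)(e^σ ℓ + b)ᵀ + e^σ L* H`. Euler's identities `ℓ · y = L` and `H y = 0` turn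
`g(y, N) = 0` into `ℓ · N = 0`; together with `b · N = 0` this kills both rank-one parts, so
`g* N = e^σ L* H N = τ L H N = τ g N`, and dividing by `√τ` gives the claim.
-/

open Real

noncomputable def pdy2 {n : ℕ} (f : (Fin n → ℝ) → ℝ) (i j : Fin n) (y : Fin n → ℝ) : ℝ :=
  fderiv ℝ (fun z => fderiv ℝ f z (Pi.single j 1)) y (Pi.single i 1)

noncomputable def gten {n : ℕ} (L : (Fin n → ℝ) → (Fin n → ℝ) → ℝ)
    (x : Fin n → ℝ) (i j : Fin n) (y : Fin n → ℝ) : ℝ :=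
  (1 / 2) * pdy2 (fun z => (L x z) ^ 2) i j y

noncomputable def RandersChange {n : ℕ} (L : (Fin n → ℝ) → (Fin n → ℝ) → ℝ)
    (σ : (Fin n → ℝ) → ℝ) (b : (Fin n → ℝ) → (Fin n → ℝ))
    (x y : Fin n → ℝ) : ℝ :=
  Real.exp (σ x) * L x y + ∑ j, b x j * y j

noncomputable def tauRC {n : ℕ} (L : (Fin n → ℝ) → (Fin n → ℝ) → ℝ)
    (σ : (Fin n → ℝ) → ℝ) (b : (Fin n → ℝ) → (Fin n → ℝ))
    (x y : Fin n → ℝ) : ℝ :=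
  Real.exp (σ x) * RandersChange L σ b x y / L x y

open Filter Topology

section Homogeneous

variable {E : Type*} [NormedAddCommGroup E] [NormedSpace ℝ E] {f : E → ℝ} {y : E}

theorem fderiv_apply_self_of_homogeneous (k : ℕ) (hf : DifferentiableAt ℝ f y)
    (hhom : ∀ c : ℝ, 0 < c → f (c • y) = c ^ k * f y) : fderiv ℝ f y y = k * f y := by
  have hray : HasDerivAt (fun c : ℝ => f (c • y)) (fderiv ℝ f y y) 1 :=
    hf.hasFDerivAt.comp_hasDerivAt_of_eq 1
      (by simpa using (hasDerivAt_id (1 : ℝ)).smul_const y) (one_smul ℝ y).symm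
  have hpow : HasDerivAt (fun c : ℝ => c ^ k * f y) (k * f y) 1 := by
    simpa using (hasDerivAt_pow k (1 : ℝ)).mul_const (f y)
  exact hray.unique (hpow.congr_of_eventuallyEq (eventually_of_mem (Ioi_mem_nhds one_pos) hhom))

theorem fderiv_smul_of_homogeneous {c : ℝ} (hc : c ≠ 0)
    (hhom : (fun z => f (c • z)) =ᶠ[𝓝 y] fun z => c * f z) :
    fderiv ℝ f (c • y) = fderiv ℝ f y := by
  have h := fderiv_comp_smul (f := f) (x := y) c
  rw [hhom.fderiv_eq, show (fun z => c * f z) = c • f from rfl, fderiv_const_smul_field] at h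
  exact smul_right_injective _ hc h.symm

end Homogeneous

noncomputable def pdy {n : ℕ} (f : (Fin n → ℝ) → ℝ) (i : Fin n) (y : Fin n → ℝ) : ℝ :=
  fderiv ℝ f y (Pi.single i 1)

section Coordinates

variable {n : ℕ} {f u : (Fin n → ℝ) → ℝ} {y : Fin n → ℝ}

theorem pdy2_eq_pdy_pdy (i j : Fin n) : pdy2 f i j y = pdy (pdy f j) i y := rfl

theorem sum_mul_pdy (v : Fin n → ℝ) : ∑ i, v i * pdy f i y = fderiv ℝ f y v := by
  classical
  conv_rhs => rw [pi_eq_sum_univ' v]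
  simp [pdy, map_sum]

theorem ContDiffAt.differentiableAt_pdy (hf : ContDiffAt ℝ 2 f y) (j : Fin n) :
    DifferentiableAt ℝ (pdy f j) y :=
  ((hf.fderiv_right (m := 1) (by norm_num)).differentiableAt (by norm_num)).clm_apply
    (differentiableAt_const _)

theorem sum_mul_pdy_of_homogeneous (hf : DifferentiableAt ℝ f y)
    (hhom : ∀ c : ℝ, 0 < c → f (c • y) = c * f y) : ∑ i, y i * pdy f i y = f y := by
  rw [sum_mul_pdy, fderiv_apply_self_of_homogeneous 1 hf (by simpa using hhom)]
  simp

/-- Euler's identity for `pdy f j`, which is homogeneous of degree `0`. -/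
theorem sum_mul_pdy2_of_homogeneous (hf : ContDiffAt ℝ 2 f y) (hy : y ≠ 0)
    (hhom : ∀ z, z ≠ 0 → ∀ c : ℝ, 0 < c → f (c • z) = c * f z) (j : Fin n) :
    ∑ i, y i * pdy2 f i j y = 0 := by
  simp only [pdy2_eq_pdy_pdy]
  rw [sum_mul_pdy, fderiv_apply_self_of_homogeneous 0 (hf.differentiableAt_pdy j)]
  · simp
  intro c hc
  have hnear : (fun z => f (c • z)) =ᶠ[𝓝 y] fun z => c * f z := by
    filter_upwards [isOpen_ne.mem_nhds hy] with z hz using hhom z hz c hc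
  simp [pdy, fderiv_smul_of_homogeneous hc.ne' hnear]

theorem pdy2_sq (hu : ContDiffAt ℝ 2 u y) (i j : Fin n) :
    pdy2 (fun z => u z ^ 2) i j y = 2 * (pdy u i y * pdy u j y + u y * pdy2 u i j y) := by
  have hpdy : pdy (fun z => u z ^ 2) j =ᶠ[𝓝 y] fun z => 2 * (u z * pdy u j z) := by
    filter_upwards [hu.eventually (by simp)] with z hz
    simp only [pdy, fderiv_fun_pow 2 (hz.differentiableAt (by norm_num)), Nat.add_one_sub_one,
      pow_one, nsmul_eq_mul, Nat.cast_ofNat, smul_apply, smul_eq_mul]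
    ring
  have hd : HasFDerivAt (fun z => 2 * (u z * pdy u j z))
      ((2 : ℝ) • (u y • fderiv ℝ (pdy u j) y + pdy u j y • fderiv ℝ u y)) y :=
    (((hu.differentiableAt (by norm_num)).hasFDerivAt.mul
      (hu.differentiableAt_pdy j).hasFDerivAt).const_mul 2)
  rw [pdy2_eq_pdy_pdy, pdy2_eq_pdy_pdy, pdy, hpdy.fderiv_eq, hd.fderiv]
  simp only [pdy, smul_add, add_apply, smul_apply,
    smul_eq_mul]
  ring

end Coordinates

section Randers

variable {n : ℕ} {L : (Fin n → ℝ) → (Fin n → ℝ) → ℝ} {σ : (Fin n → ℝ) → ℝ}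
  {b : (Fin n → ℝ) → (Fin n → ℝ)} {x y N : Fin n → ℝ}

theorem hasFDerivAt_randersChange {z : Fin n → ℝ} (hL : DifferentiableAt ℝ (L x) z) :
    HasFDerivAt (RandersChange L σ b x)
      (exp (σ x) • fderiv ℝ (L x) z + ∑ k, b x k • ContinuousLinearMap.proj k) z := by
  have hβ : (fun z : Fin n → ℝ => ∑ k, b x k * z k)
      = ⇑(∑ k, b x k • (ContinuousLinearMap.proj k : (Fin n → ℝ) →L[ℝ] ℝ)) := by
    ext z; simp
  have := (hL.hasFDerivAt.const_mul (exp (σ x))).add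
    (∑ k, b x k • (ContinuousLinearMap.proj k : (Fin n → ℝ) →L[ℝ] ℝ)).hasFDerivAt
  rwa [← hβ] at this

theorem pdy_randersChange {z : Fin n → ℝ} (hL : DifferentiableAt ℝ (L x) z) (j : Fin n) :
    pdy (RandersChange L σ b x) j z = exp (σ x) * pdy (L x) j z + b x j := by
  simp [pdy, (hasFDerivAt_randersChange hL).fderiv, Pi.single_apply]

theorem pdy2_randersChange (hL : ContDiffAt ℝ 2 (L x) y) (i j : Fin n) :
    pdy2 (RandersChange L σ b x) i j y = exp (σ x) * pdy2 (L x) i j y := by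
  have hpdy : pdy (RandersChange L σ b x) j
      =ᶠ[𝓝 y] fun z => exp (σ x) * pdy (L x) j z + b x j := by
    filter_upwards [hL.eventually (by simp)] with z hz
    exact pdy_randersChange (hz.differentiableAt (by norm_num)) j
  have hd := ((hL.differentiableAt_pdy j).hasFDerivAt.const_mul (exp (σ x))).add_const (b x j)
  rw [pdy2_eq_pdy_pdy, pdy2_eq_pdy_pdy, pdy, hpdy.fderiv_eq, hd.fderiv]
  simp [pdy]

theorem ContDiffAt.randersChange (hL : ContDiffAt ℝ 2 (L x) y) :
    ContDiffAt ℝ 2 (RandersChange L σ b x) y := by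
  unfold RandersChange
  fun_prop

theorem gten_eq (hL : ContDiffAt ℝ 2 (L x) y) (i j : Fin n) :
    gten L x i j y = pdy (L x) i y * pdy (L x) j y + L x y * pdy2 (L x) i j y := by
  rw [gten, pdy2_sq hL]
  ring

theorem gten_randersChange_eq (hL : ContDiffAt ℝ 2 (L x) y) (i j : Fin n) :
    gten (RandersChange L σ b) x i j y
      = (exp (σ x) * pdy (L x) i y + b x i) * (exp (σ x) * pdy (L x) j y + b x j)
        + RandersChange L σ b x y * (exp (σ x) * pdy2 (L x) i j y) := by
  rw [gten, pdy2_sq hL.randersChange, pdy_randersChange (hL.differentiableAt (by norm_num)),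
    pdy_randersChange (hL.differentiableAt (by norm_num)), pdy2_randersChange hL]
  ring

theorem sum_pdy_mul_eq_zero_of_gten (hL : ContDiffAt ℝ 2 (L x) y) (hy : y ≠ 0)
    (hhom : ∀ z, z ≠ 0 → ∀ c : ℝ, 0 < c → L x (c • z) = c * L x z) (hLy : L x y ≠ 0)
    (hN : ∑ i, ∑ j, gten L x i j y * y i * N j = 0) : ∑ j, pdy (L x) j y * N j = 0 := by
  have hgy : ∀ j, ∑ i, gten L x i j y * y i = L x y * pdy (L x) j y := by
    intro j
    calc ∑ i, gten L x i j y * y i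
        = (∑ i, y i * pdy (L x) i y) * pdy (L x) j y + L x y * ∑ i, y i * pdy2 (L x) i j y := by
          simp only [gten_eq hL, Finset.sum_mul, Finset.mul_sum, ← Finset.sum_add_distrib]
          exact Finset.sum_congr rfl fun i _ => by ring
      _ = L x y * pdy (L x) j y := by
          rw [sum_mul_pdy_of_homogeneous (hL.differentiableAt (by norm_num)) (hhom y hy),
            sum_mul_pdy2_of_homogeneous hL hy hhom, mul_zero, add_zero]
  have hsum : ∑ i, ∑ j, gten L x i j y * y i * N j = L x y * ∑ j, pdy (L x) j y * N j := by
    rw [Finset.sum_comm, Finset.mul_sum]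
    exact Finset.sum_congr rfl fun j _ => by rw [← Finset.sum_mul, hgy, mul_assoc]
  exact (mul_eq_zero.mp (hsum ▸ hN)).resolve_left hLy

theorem sum_gten_randersChange_mul_eq (hL : ContDiffAt ℝ 2 (L x) y) (hLy : L x y ≠ 0)
    (hℓN : ∑ j, pdy (L x) j y * N j = 0) (hbN : ∑ j, b x j * N j = 0) (i : Fin n) :
    ∑ j, gten (RandersChange L σ b) x i j y * N j
      = tauRC L σ b x y * ∑ j, gten L x i j y * N j := by
  have hstar : ∑ j, gten (RandersChange L σ b) x i j y * N j
      = (exp (σ x) * pdy (L x) i y + b x i)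
          * (exp (σ x) * ∑ j, pdy (L x) j y * N j + ∑ j, b x j * N j)
        + RandersChange L σ b x y * exp (σ x) * ∑ j, pdy2 (L x) i j y * N j := by
    simp only [gten_randersChange_eq hL, Finset.mul_sum, ← Finset.sum_add_distrib]
    exact Finset.sum_congr rfl fun j _ => by ring
  have hg : ∑ j, gten L x i j y * N j
      = pdy (L x) i y * ∑ j, pdy (L x) j y * N j + L x y * ∑ j, pdy2 (L x) i j y * N j := by
    simp only [gten_eq hL, Finset.mul_sum, ← Finset.sum_add_distrib]
    exact Finset.sum_congr rfl fun j _ => by ring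
  rw [hstar, hg, hℓN, hbN, tauRC]
  field_simp
  ring

end Randers

theorem randers_conformal_covariant_normal_general
    {n : ℕ} (U : Set (Fin n → ℝ))
    (L : (Fin n → ℝ) → (Fin n → ℝ) → ℝ)
    (hL : ContDiffOn ℝ (⊤ : ℕ∞)
      (fun p : (Fin n → ℝ) × (Fin n → ℝ) => L p.1 p.2)
      (U ×ˢ {y : Fin n → ℝ | y ≠ 0}))
    (hLpos : ∀ x ∈ U, ∀ y : Fin n → ℝ, y ≠ 0 → 0 < L x y)
    (hLhom : ∀ x ∈ U, ∀ y : Fin n → ℝ, y ≠ 0 → ∀ c : ℝ, 0 < c →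
      L x (c • y) = c * L x y)
    (σ : (Fin n → ℝ) → ℝ)
    (b : (Fin n → ℝ) → (Fin n → ℝ))
    (x : Fin n → ℝ) (hx : x ∈ U) (y : Fin n → ℝ) (hy : y ≠ 0)
    (N : Fin n → ℝ)
    (hN : ∑ i, ∑ j, gten L x i j y * y i * N j = 0)
    (hbN : ∑ i, b x i * N i = 0) :
    ∀ i : Fin n,
      ∑ j, gten (RandersChange L σ b) x i j y * (N j / Real.sqrt (tauRC L σ b x y))
        = Real.sqrt (tauRC L σ b x y) * ∑ j, gten L x i j y * N j := by
  intro i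
  have hLx : ContDiffAt ℝ 2 (L x) y :=
    ((hL.comp (contDiff_const.prodMk contDiff_id).contDiffOn fun z hz => ⟨hx, hz⟩).contDiffAt
      (isOpen_ne.mem_nhds hy)).of_le (WithTop.coe_le_coe.mpr le_top)
  have hLy : L x y ≠ 0 := (hLpos x hx y hy).ne'
  have hℓN := sum_pdy_mul_eq_zero_of_gten hLx hy (hLhom x hx) hLy hN
  calc ∑ j, gten (RandersChange L σ b) x i j y * (N j / √(tauRC L σ b x y))
      = (∑ j, gten (RandersChange L σ b) x i j y * N j) / √(tauRC L σ b x y) := by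
        rw [Finset.sum_div]
        simp only [mul_div_assoc]
    _ = √(tauRC L σ b x y) * ∑ j, gten L x i j y * N j := by
        rw [sum_gten_randersChange_mul_eq hLx hLy hℓN hbN, mul_div_right_comm, div_sqrt]

/-- For a vector `N` that is `g`-orthogonal to `y` and annihilated by `b`, the
`g*`-covariant components of `N* = N/√τ` are `N*_i = √τ N_i`. -/
theorem randers_conformal_covariant_normal
    {n : ℕ} (U : Set (Fin n → ℝ)) (hU : IsOpen U)
    (L : (Fin n → ℝ) → (Fin n → ℝ) → ℝ)
    (hL : ContDiffOn ℝ (⊤ : ℕ∞)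
      (fun p : (Fin n → ℝ) × (Fin n → ℝ) => L p.1 p.2)
      (U ×ˢ {y : Fin n → ℝ | y ≠ 0}))
    (hLpos : ∀ x ∈ U, ∀ y : Fin n → ℝ, y ≠ 0 → 0 < L x y)
    (hLhom : ∀ x ∈ U, ∀ y : Fin n → ℝ, y ≠ 0 → ∀ c : ℝ, 0 < c →
      L x (c • y) = c * L x y)
    (σ : (Fin n → ℝ) → ℝ) (hσ : ContDiffOn ℝ (⊤ : ℕ∞) σ U)
    (b : (Fin n → ℝ) → (Fin n → ℝ)) (hb : ContDiffOn ℝ (⊤ : ℕ∞) b U)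
    (x : Fin n → ℝ) (hx : x ∈ U) (y : Fin n → ℝ) (hy : y ≠ 0)
    (N : Fin n → ℝ)
    (hN : ∑ i, ∑ j, gten L x i j y * y i * N j = 0)
    (hbN : ∑ i, b x i * N i = 0)
    (htau : 0 < tauRC L σ b x y) :
    ∀ i : Fin n,
      ∑ j, gten (RandersChange L σ b) x i j y * (N j / Real.sqrt (tauRC L σ b x y))
        = Real.sqrt (tauRC L σ b x y) * ∑ j, gten L x i j y * N j :=
  randers_conformal_covariant_normal_general U L hL hLpos hLhom σ b x hx y hy N hN hbN
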